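/- arXiv:1807.03384 — 2 statements merged into one kernel-verified Lean document; each statement's English description precedes it below -/
import Mathlib

section
/- Let B be a finite Kashiwara crystal for GL_n satisfying the Stembridge axioms (S1)-(S3) and (S3*). Then every connected component of B contains a unique highest-weight element, i.e., a unique element x with e_i(x) undefined for all i. -/
/-- A finite Kashiwara crystal for GL_n satisfying the Stembridge axioms
(K1), (K2), (S1), (S2), (S3), (S3*).  Indices `i : Fin (n-1)` correspond to
the labels `1, …, n-1`, and `wt` takes values in `ℤ^n`. -/
structure StembridgeCrystal (n : ℕ) where
  B : Type
  fintype : Fintype B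
  e : Fin (n - 1) → B → Option B
  f : Fin (n - 1) → B → Option B
  eps : Fin (n - 1) → B → ℤ
  phi : Fin (n - 1) → B → ℤ
  wt : B → Fin n → ℤ
  /-- `e i` and `f i` are partial inverses. -/
  inverse : ∀ i x y, e i x = some y ↔ f i y = some x
  /-- (K1): effect of `e i` on the statistics and the weight. -/
  K1 : ∀ i x y, e i x = some y →
    eps i y = eps i x - 1 ∧ phi i y = phi i x + 1 ∧
    (∀ j : Fin n, wt y j = wt x j +
      (if (j : ℕ) = (i : ℕ) then 1 else if (j : ℕ) = (i : ℕ) + 1 then -1 else 0))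
  /-- (K2): `φ_i(x) = ⟨wt(x), α_i⟩ + ε_i(x)`. -/
  K2 : ∀ i x, phi i x =
    (wt x ⟨(i : ℕ), by have := i.isLt; omega⟩ -
     wt x ⟨(i : ℕ) + 1, by have := i.isLt; omega⟩) + eps i x
  /-- (S1) for the lowering operators. -/
  S1f : ∀ (i j : Fin (n-1)) (w x y : B), ((i : ℕ) + 1 < (j : ℕ) ∨ (j : ℕ) + 1 < (i : ℕ)) →
    f i w = some x → f j w = some y → ∃ z, f j x = some z ∧ f i y = some z
  /-- (S1) for the raising operators. -/
  S1e : ∀ (i j : Fin (n-1)) (w x y : B), ((i : ℕ) + 1 < (j : ℕ) ∨ (j : ℕ) + 1 < (i : ℕ)) →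
    e i w = some x → e j w = some y → ∃ z, e j x = some z ∧ e i y = some z
  /-- (S2): change of `i`-string lengths along an `(i±1)`-edge. -/
  S2 : ∀ (i j : Fin (n-1)) (w x : B), ((i : ℕ) = (j : ℕ) + 1 ∨ (j : ℕ) = (i : ℕ) + 1) →
    f j w = some x →
    (eps i w - eps i x = 0 ∧ phi i w - phi i x = -1) ∨
    (eps i w - eps i x = 1 ∧ phi i w - phi i x = 0)
  /-- (S3): square or octagon relation for adjacent lowering operators. -/
  S3 : ∀ (i j : Fin (n-1)) (w x y : B), ((i : ℕ) = (j : ℕ) + 1 ∨ (j : ℕ) = (i : ℕ) + 1) →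
    f i w = some x → f j w = some y →
    ((eps j w - eps j x, eps i w - eps i y) ≠ ((0 : ℤ), (0 : ℤ)) →
      ∃ z, f j x = some z ∧ f i y = some z) ∧
    ((eps j w - eps j x, eps i w - eps i y) = ((0 : ℤ), (0 : ℤ)) →
      ∃ z, (((f i w).bind (f j)).bind (f j)).bind (f i) = some z ∧
           (((f j w).bind (f i)).bind (f i)).bind (f j) = some z)
  /-- (S3*): dual square or octagon relation for adjacent raising operators. -/
  S3star : ∀ (i j : Fin (n-1)) (w x y : B), ((i : ℕ) = (j : ℕ) + 1 ∨ (j : ℕ) = (i : ℕ) + 1) →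
    e i w = some x → e j w = some y →
    ((phi j w - phi j x, phi i w - phi i y) ≠ ((0 : ℤ), (0 : ℤ)) →
      ∃ z, e j x = some z ∧ e i y = some z) ∧
    ((phi j w - phi j x, phi i w - phi i y) = ((0 : ℤ), (0 : ℤ)) →
      ∃ z, (((e i w).bind (e j)).bind (e j)).bind (e i) = some z ∧
           (((e j w).bind (e i)).bind (e i)).bind (e j) = some z)

/-- Vertices joined by an edge of the crystal graph (in either direction they are
in the same connected component; we generate the equivalence). -/
def StembridgeCrystal.step {n : ℕ} (C : StembridgeCrystal n) (a b : C.B) : Prop :=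
  ∃ i, C.f i a = some b

namespace StembridgeCrystal

variable {n : ℕ} (C : StembridgeCrystal n)

/-- One raising step. -/
def estep (a b : C.B) : Prop := ∃ i, C.e i a = some b

/-- The weight functional `Σ j * wt w j`, which strictly decreases along `estep`. -/
noncomputable def M (w : C.B) : ℤ := ∑ j : Fin n, (j : ℤ) * C.wt w j

lemma M_estep {a b : C.B} (h : C.estep a b) : C.M b = C.M a - 1 := by
  classical
  obtain ⟨i, hi⟩ := h
  have hK := (C.K1 i a b hi).2.2
  have hn : (i : ℕ) + 1 < n := by have := i.isLt; omega
  have hi0 : (i : ℕ) < n := by omega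
  have key : ∀ j : Fin n, (j : ℤ) * C.wt b j = (j : ℤ) * C.wt a j +
      ((if j = (⟨(i : ℕ), hi0⟩ : Fin n) then ((i : ℕ) : ℤ) else 0) +
       (if j = (⟨(i : ℕ) + 1, hn⟩ : Fin n) then -(((i : ℕ) : ℤ) + 1) else 0)) := by
    intro j
    rw [hK j]
    by_cases h1 : (j : ℕ) = (i : ℕ)
    · have hj : j = (⟨(i : ℕ), hi0⟩ : Fin n) := by exact Fin.ext h1
      have hne : j ≠ (⟨(i : ℕ) + 1, hn⟩ : Fin n) := by
        intro hc; rw [Fin.ext_iff] at hc; simp at hc; omega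
      simp [h1, hj, hne]
      ring
    · by_cases h2 : (j : ℕ) = (i : ℕ) + 1
      · have hj : j = (⟨(i : ℕ) + 1, hn⟩ : Fin n) := by exact Fin.ext h2
        have hne : j ≠ (⟨(i : ℕ), hi0⟩ : Fin n) := by
          intro hc; rw [Fin.ext_iff] at hc; simp at hc; omega
        simp [h1, h2, hj, hne]
        ring
      · have hne1 : j ≠ (⟨(i : ℕ), hi0⟩ : Fin n) := by
          intro hc; rw [Fin.ext_iff] at hc; simp at hc; omega
        have hne2 : j ≠ (⟨(i : ℕ) + 1, hn⟩ : Fin n) := by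
          intro hc; rw [Fin.ext_iff] at hc; simp at hc; omega
        simp [h1, h2, hne1, hne2]
  unfold M
  rw [Finset.sum_congr rfl (fun j _ => key j)]
  rw [Finset.sum_add_distrib, Finset.sum_add_distrib]
  rw [Finset.sum_ite_eq' Finset.univ, Finset.sum_ite_eq' Finset.univ]
  simp only [Finset.mem_univ, if_true]
  ring

/-- A natural number measure decreasing along `estep`. -/
noncomputable def meas (w : C.B) : ℕ :=
  letI := C.fintype
  (C.M w - (Finset.univ.image C.M).min' ⟨C.M w, Finset.mem_image_of_mem _ (Finset.mem_univ w)⟩).toNat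

lemma meas_lt {a b : C.B} (h : C.estep a b) : C.meas b < C.meas a := by
  classical
  letI := C.fintype
  have hM := C.M_estep h
  have hmin : ∀ w : C.B, (Finset.univ.image C.M).min'
      ⟨C.M w, Finset.mem_image_of_mem _ (Finset.mem_univ w)⟩ ≤ C.M w := by
    intro w
    exact Finset.min'_le _ _ (Finset.mem_image_of_mem _ (Finset.mem_univ w))
  have h1 := hmin a
  have h2 := hmin b
  unfold meas
  omega

open Relation

/-- Local joinability of the raising relation, from (S1e) and (S3*). -/
lemma locConf {w a b : C.B} (ha : C.estep w a) (hb : C.estep w b) :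
    ∃ d, ReflTransGen C.estep a d ∧ ReflTransGen C.estep b d := by
  obtain ⟨i, hi⟩ := ha
  obtain ⟨j, hj⟩ := hb
  by_cases hij : i = j
  · subst hij
    rw [hi, Option.some_inj] at hj
    subst hj
    exact ⟨a, .refl, .refl⟩
  · have hijv : (i : ℕ) ≠ (j : ℕ) := fun hc => hij (Fin.ext hc)
    rcases (by omega : (i : ℕ) + 1 < (j : ℕ) ∨ (j : ℕ) + 1 < (i : ℕ) ∨
        (i : ℕ) = (j : ℕ) + 1 ∨ (j : ℕ) = (i : ℕ) + 1) with hfar | hfar | hadj | hadj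
    · obtain ⟨z, hz1, hz2⟩ := C.S1e i j w a b (Or.inl hfar) hi hj
      exact ⟨z, .single ⟨j, hz1⟩, .single ⟨i, hz2⟩⟩
    · obtain ⟨z, hz1, hz2⟩ := C.S1e i j w a b (Or.inr hfar) hi hj
      exact ⟨z, .single ⟨j, hz1⟩, .single ⟨i, hz2⟩⟩
    all_goals {
      have hS := C.S3star i j w a b (by omega) hi hj
      by_cases hΔ : (C.phi j w - C.phi j a, C.phi i w - C.phi i b) = ((0 : ℤ), (0 : ℤ))
      · obtain ⟨z, hz1, hz2⟩ := hS.2 hΔ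
        rw [hi] at hz1
        rw [hj] at hz2
        simp only [Option.bind_some] at hz1 hz2
        -- unpack the three binds on each side
        obtain ⟨u2, hu2', hu3⟩ := Option.bind_eq_some_iff.mp hz1
        obtain ⟨u1, hu1, hu2⟩ := Option.bind_eq_some_iff.mp hu2'
        obtain ⟨v2, hv2', hv3⟩ := Option.bind_eq_some_iff.mp hz2
        obtain ⟨v1, hv1, hv2⟩ := Option.bind_eq_some_iff.mp hv2'
        refine ⟨z, ?_, ?_⟩
        · exact .head ⟨j, hu1⟩ (.head ⟨j, hu2⟩ (.single ⟨i, hu3⟩))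
        · exact .head ⟨i, hv1⟩ (.head ⟨i, hv2⟩ (.single ⟨j, hv3⟩))
      · obtain ⟨z, hz1, hz2⟩ := hS.1 hΔ
        exact ⟨z, .single ⟨j, hz1⟩, .single ⟨i, hz2⟩⟩ }

/-- Newman's lemma: confluence of the raising relation. -/
lemma confluence : ∀ (N : ℕ) (w : C.B), C.meas w ≤ N → ∀ a b,
    ReflTransGen C.estep w a → ReflTransGen C.estep w b →
    ∃ d, ReflTransGen C.estep a d ∧ ReflTransGen C.estep b d := by
  intro N
  induction N using Nat.strong_induction_on with
  | _ N IH =>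
    intro w hw a b ha hb
    rcases ha.cases_head with rfl | ⟨a1, hwa1, ha1⟩
    · exact ⟨b, hb, .refl⟩
    rcases hb.cases_head with rfl | ⟨b1, hwb1, hb1⟩
    · exact ⟨a, .refl, ReflTransGen.head hwa1 ha1⟩
    obtain ⟨c, hc1, hc2⟩ := C.locConf hwa1 hwb1
    have hma : C.meas a1 < N := lt_of_lt_of_le (C.meas_lt hwa1) hw
    have hmb : C.meas b1 < N := lt_of_lt_of_le (C.meas_lt hwb1) hw
    obtain ⟨d1, hd1, hd2⟩ := IH (C.meas a1) hma a1 le_rfl a c ha1 hc1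
    obtain ⟨d, hd3, hd4⟩ := IH (C.meas b1) hmb b1 le_rfl b d1 hb1 (hc2.trans hd2)
    exact ⟨d, hd1.trans hd4, hd3⟩

/-- Church–Rosser property. -/
lemma cr {a b : C.B} (h : EqvGen C.estep a b) :
    ∃ d, ReflTransGen C.estep a d ∧ ReflTransGen C.estep b d := by
  induction h with
  | rel a b h => exact ⟨b, .single h, .refl⟩
  | refl a => exact ⟨a, .refl, .refl⟩
  | symm a b _ ih => exact ⟨ih.choose, ih.choose_spec.2, ih.choose_spec.1⟩
  | trans a b c _ _ ih1 ih2 =>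
    obtain ⟨d1, h1, h2⟩ := ih1
    obtain ⟨d2, h3, h4⟩ := ih2
    obtain ⟨d, hd1, hd2⟩ := C.confluence (C.meas b) b le_rfl d1 d2 h2 h3
    exact ⟨d, h1.trans hd1, h4.trans hd2⟩

/-- Every element reaches a highest-weight element. -/
lemma exists_nf (w : C.B) : ∃ m, ReflTransGen C.estep w m ∧ ∀ i, C.e i m = none := by
  by_cases h : ∀ i, C.e i w = none
  · exact ⟨w, .refl, h⟩
  · push_neg at h
    obtain ⟨i, hi⟩ := h
    obtain ⟨y, hy⟩ := Option.ne_none_iff_exists'.mp hi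
    have : C.meas y < C.meas w := C.meas_lt ⟨i, hy⟩
    obtain ⟨m, hm1, hm2⟩ := exists_nf y
    exact ⟨m, .head ⟨i, hy⟩ hm1, hm2⟩
termination_by C.meas w

lemma nf_fixed {m d : C.B} (hnf : ∀ i, C.e i m = none)
    (h : ReflTransGen C.estep m d) : d = m := by
  rcases h.cases_head with rfl | ⟨c, ⟨i, hc⟩, _⟩
  · rfl
  · rw [hnf i] at hc; exact absurd hc (by simp)

lemma estep_iff_step (a b : C.B) : C.estep a b ↔ C.step b a := by
  constructor
  · rintro ⟨i, hi⟩; exact ⟨i, (C.inverse i a b).mp hi⟩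
  · rintro ⟨i, hi⟩; exact ⟨i, (C.inverse i a b).mpr hi⟩

lemma eqv_step_of_estep {a b : C.B} (h : EqvGen C.estep a b) : EqvGen C.step a b := by
  induction h with
  | rel a b h => exact .symm _ _ (.rel _ _ ((C.estep_iff_step a b).mp h))
  | refl a => exact .refl a
  | symm a b _ ih => exact .symm _ _ ih
  | trans a b c _ _ ih1 ih2 => exact .trans _ _ _ ih1 ih2

lemma eqv_estep_of_step {a b : C.B} (h : EqvGen C.step a b) : EqvGen C.estep a b := by
  induction h with
  | rel a b h => exact .symm _ _ (.rel _ _ ((C.estep_iff_step b a).mpr h))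
  | refl a => exact .refl a
  | symm a b _ ih => exact .symm _ _ ih
  | trans a b c _ _ ih1 ih2 => exact .trans _ _ _ ih1 ih2

lemma eqv_of_rtg {a b : C.B} (h : ReflTransGen C.estep a b) : EqvGen C.estep a b := by
  induction h with
  | refl => exact .refl a
  | tail _ h2 ih => exact .trans _ _ _ ih (.rel _ _ h2)

end StembridgeCrystal


/-- **Stembridge's theorem (uniqueness of highest weight elements).**
In a finite Kashiwara crystal for GL_n satisfying the Stembridge axioms, every
connected component contains a unique highest-weight element, i.e. a unique
element on which all raising operators are undefined. -/
theorem stembridge_unique_highest_weight {n : ℕ} (C : StembridgeCrystal n) (x : C.B) :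
    ∃! m : C.B, Relation.EqvGen C.step x m ∧ ∀ i, C.e i m = none := by
  classical
  obtain ⟨m, hr, hnf⟩ := C.exists_nf x
  refine ⟨m, ⟨C.eqv_step_of_estep (C.eqv_of_rtg hr), hnf⟩, ?_⟩
  rintro y ⟨hy, hynf⟩
  have heq : Relation.EqvGen C.estep y m :=
    .trans _ _ _ (.symm _ _ (C.eqv_estep_of_step hy)) (C.eqv_of_rtg hr)
  obtain ⟨d, h1, h2⟩ := C.cr heq
  rw [← C.nf_fixed hynf h1, ← C.nf_fixed hnf h2]
end

section
/- Let w be a word in {1', 1, 2', 2, 3', 3} such that both F_1'(w) and F_2'(w) are defined. Then F_1'(F_2'(w)) = F_2'(F_1'(w)) ≠ ∅. (Primed square axiom for words/shifted tableaux.) -/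
/-! ## Words in primed alphabets and the Gillespie–Levinson–Purbhoo operators -/

/-- A letter `(a, b)`: value `a`, primed iff `b = true`.  So `(i, false)` is
the letter `i` and `(i, true)` is the letter `i'`. -/
abbrev PLetter := ℕ × Bool

/-- A word in a primed alphabet. -/
abbrev PWord := List PLetter

/-- The linear order on the alphabet `1' < 1 < 2' < 2 < ⋯`, via
`lval i' = 2i - 1 < lval i = 2i`. -/
def lval (l : PLetter) : ℕ := if l.2 then 2 * l.1 - 1 else 2 * l.1

/-- Canonicalization: unprime the first (leftmost) occurrence of each value. -/
def canonizeAux : List ℕ → PWord → PWord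
  | _, [] => []
  | seen, l :: rest =>
      (if l.1 ∈ seen then l else (l.1, false)) :: canonizeAux (l.1 :: seen) rest

/-- The canonical representative of a word. -/
def canonize (w : PWord) : PWord := canonizeAux [] w

/-- A word is canonical if the leftmost `i` or `i'` is unprimed, for each `i`. -/
def Canonical (w : PWord) : Prop := canonize w = w

/-- The standardization rank of the letter in position `p` of `w`:  ties among
equal unprimed letters are broken left-to-right, ties among equal primed
letters right-to-left. -/
def stdRank (w : PWord) (p : ℕ) : ℕ :=
  ((List.range w.length).filter (fun q => decide (
    lval (w.getD q (0, false)) < lval (w.getD p (0, false)) ∨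
    (lval (w.getD q (0, false)) = lval (w.getD p (0, false)) ∧
      (if (w.getD p (0, false)).2 then p < q else q < p))))).length

/-- The standardization of a word, recorded as the list of ranks of its
letters in position order. -/
def std (w : PWord) : List ℕ := (List.range w.length).map (stdRank w)

/-- `wtv w i` is the number of letters `i` or `i'` in `w`. -/
def wtv (w : PWord) (i : ℕ) : ℕ := (w.filter (fun l => decide (l.1 = i))).length

/-- `IsFprime i w z` : `z = F_i'(w)`, i.e. `z` is the canonical word with the
same standardization as `w` and weight `wt(w) - α_i`. -/
def IsFprime (i : ℕ) (w z : PWord) : Prop :=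
  Canonical z ∧ std z = std w ∧
  wtv z i + 1 = wtv w i ∧ wtv z (i + 1) = wtv w (i + 1) + 1 ∧
  ∀ j, j ≠ i → j ≠ i + 1 → wtv z j = wtv w j

/-- `IsEprime i w z` : `z = E_i'(w)`, i.e. `z` is the canonical word with the
same standardization as `w` and weight `wt(w) + α_i`. -/
def IsEprime (i : ℕ) (w z : PWord) : Prop :=
  Canonical z ∧ std z = std w ∧
  wtv z i = wtv w i + 1 ∧ wtv z (i + 1) + 1 = wtv w (i + 1) ∧
  ∀ j, j ≠ i → j ≠ i + 1 → wtv z j = wtv w j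

/-! ### The lattice walk for words in `{1', 1, 2', 2}` -/

/-- One step of the lattice walk: on the axes, `1, 1'` step east and `2, 2'`
step north; in the interior of the first quadrant `1` steps south, `1'` east,
`2` north and `2'` west. -/
def wstep (p : ℕ × ℕ) (l : PLetter) : ℕ × ℕ :=
  if p.1 = 0 ∨ p.2 = 0 then
    (if l.1 = 2 then (p.1, p.2 + 1) else (p.1 + 1, p.2))
  else if l.1 = 2 then (if l.2 then (p.1 - 1, p.2) else (p.1, p.2 + 1))
  else (if l.2 then (p.1 + 1, p.2) else (p.1, p.2 - 1))

/-- The endpoint of the lattice walk of a word in `{1', 1, 2', 2}`. -/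
def walkEnd (w : PWord) : ℕ × ℕ := w.foldl wstep (0, 0)

/-- The position of the walk just before the letter in position `k`. -/
def wloc (u : PWord) (k : ℕ) : ℕ × ℕ := walkEnd (u.take k)

/-- The substring of `u` of length `m` starting at position `k`. -/
def seg (u : PWord) (k m : ℕ) : PWord := (u.drop k).take m

/-- The length of a critical substring of type `t` (types `1` and `2` have an
inner repeated block of length `m`). -/
def critLen (t m : ℕ) : ℕ := if t = 1 ∨ t = 2 then m + 2 else 1

/-- `CritF u k m t` : the substring of `u` starting at position `k` is an
`F_1`-critical substring of type `t` (`t ∈ {1,…,5}`, corresponding to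
1F, …, 5F in the GLP table), with inner block of length `m`. -/
def CritF (u : PWord) (k m t : ℕ) : Prop :=
  (t = 1 ∧ seg u k (m + 2) =
      (1, false) :: (List.replicate m ((1 : ℕ), true) ++ [((2 : ℕ), true)]) ∧
    ((wloc u k).2 = 0 ∨ ((wloc u k).2 = 1 ∧ 1 ≤ (wloc u k).1))) ∨
  (t = 2 ∧ seg u k (m + 2) =
      (1, false) :: (List.replicate m ((2 : ℕ), false) ++ [((1 : ℕ), true)]) ∧
    ((wloc u k).1 = 0 ∨ ((wloc u k).1 = 1 ∧ 1 ≤ (wloc u k).2))) ∨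
  (t = 3 ∧ seg u k 1 = [((1 : ℕ), false)] ∧ (wloc u k).2 = 0) ∨
  (t = 4 ∧ seg u k 1 = [((1 : ℕ), true)] ∧ (wloc u k).1 = 0) ∨
  (t = 5 ∧ (seg u k 1 = [((1 : ℕ), false)] ∨ seg u k 1 = [((2 : ℕ), true)]) ∧
    (wloc u k).1 = 1 ∧ 1 ≤ (wloc u k).2)

/-- The transformed segment for an `F_1`-critical substring of type `t`. -/
def FnewSeg (t m : ℕ) : PWord :=
  if t = 1 then (2, true) :: (List.replicate m ((1 : ℕ), true) ++ [((2 : ℕ), false)])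
  else if t = 2 then (2, true) :: (List.replicate m ((2 : ℕ), false) ++ [((1 : ℕ), false)])
  else if t = 3 then [((2 : ℕ), false)]
  else [((2 : ℕ), true)]

/-- `FinalCritF w u k m t` : `u` is a representative of the word `w` and the
critical substring of `u` at position `k` (type `t`, block length `m`) is the
final `F_1`-critical substring of `w`: it has the highest possible starting
index among all representatives, and is longest among those. -/
def FinalCritF (w u : PWord) (k m t : ℕ) : Prop :=
  canonize u = canonize w ∧ CritF u k m t ∧
  ∀ u' k' m' t', canonize u' = canonize w → CritF u' k' m' t' →
    k' < k ∨ (k' = k ∧ critLen t' m' ≤ critLen t m)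

/-- `IsF1base w z` : `z = F_1(w)` for words in `{1', 1, 2', 2}`, computed by
transforming the final `F_1`-critical substring (types 1F–4F; type 5F means
`F_1(w)` is undefined). -/
def IsF1base (w z : PWord) : Prop :=
  ∃ u k m t, FinalCritF w u k m t ∧ t ≠ 5 ∧
    z = canonize (u.take k ++ FnewSeg t m ++ u.drop (k + critLen t m))

/-- `CritE u k m t` : `E_1`-critical substrings (types 1E–5E of the GLP table). -/
def CritE (u : PWord) (k m t : ℕ) : Prop :=
  (t = 1 ∧ seg u k (m + 2) =
      (2, true) :: (List.replicate m ((2 : ℕ), false) ++ [((1 : ℕ), false)]) ∧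
    ((wloc u k).1 = 0 ∨ ((wloc u k).1 = 1 ∧ 1 ≤ (wloc u k).2))) ∨
  (t = 2 ∧ seg u k (m + 2) =
      (2, true) :: (List.replicate m ((1 : ℕ), true) ++ [((2 : ℕ), false)]) ∧
    ((wloc u k).2 = 0 ∨ ((wloc u k).2 = 1 ∧ 1 ≤ (wloc u k).1))) ∨
  (t = 3 ∧ seg u k 1 = [((2 : ℕ), true)] ∧ (wloc u k).1 = 0) ∨
  (t = 4 ∧ seg u k 1 = [((2 : ℕ), false)] ∧ (wloc u k).2 = 0) ∨
  (t = 5 ∧ (seg u k 1 = [((1 : ℕ), false)] ∨ seg u k 1 = [((2 : ℕ), true)]) ∧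
    (wloc u k).2 = 1 ∧ 1 ≤ (wloc u k).1)

/-- The transformed segment for an `E_1`-critical substring of type `t`. -/
def EnewSeg (t m : ℕ) : PWord :=
  if t = 1 then (1, false) :: (List.replicate m ((2 : ℕ), false) ++ [((1 : ℕ), true)])
  else if t = 2 then (1, false) :: (List.replicate m ((1 : ℕ), true) ++ [((2 : ℕ), true)])
  else if t = 3 then [((1 : ℕ), true)]
  else [((1 : ℕ), false)]

/-- The final `E_1`-critical substring. -/
def FinalCritE (w u : PWord) (k m t : ℕ) : Prop :=
  canonize u = canonize w ∧ CritE u k m t ∧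
  ∀ u' k' m' t', canonize u' = canonize w → CritE u' k' m' t' →
    k' < k ∨ (k' = k ∧ critLen t' m' ≤ critLen t m)

/-- `IsE1base w z` : `z = E_1(w)` for words in `{1', 1, 2', 2}`. -/
def IsE1base (w z : PWord) : Prop :=
  ∃ u k m t, FinalCritE w u k m t ∧ t ≠ 5 ∧
    z = canonize (u.take k ++ EnewSeg t m ++ u.drop (k + critLen t m))

/-! ### The general operators `F_i, E_i` via the `{i, i+1}`-subword -/

/-- Renormalize a letter of value `i` or `i+1` to value `1` or `2`. -/
def projLetter (i : ℕ) (l : PLetter) : PLetter := (if l.1 = i then 1 else 2, l.2)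

/-- The `{i, i+1}`-subword of `w`, renormalized to the values `1, 2`. -/
def proj (i : ℕ) (w : PWord) : PWord :=
  (w.filter (fun l => decide (l.1 = i ∨ l.1 = i + 1))).map (projLetter i)

/-- `IsFgen i w z` : `z = F_i(w)`: the letters of value different from
`i, i+1` are unchanged, and the `{i, i+1}`-subword transforms by `F_1`. -/
def IsFgen (i : ℕ) (w z : PWord) : Prop :=
  w.length = z.length ∧ Canonical z ∧
  (∀ p, ((w.getD p (0, false)).1 = i ∨ (w.getD p (0, false)).1 = i + 1) ↔
        ((z.getD p (0, false)).1 = i ∨ (z.getD p (0, false)).1 = i + 1)) ∧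
  (∀ p, p < w.length →
    ¬((w.getD p (0, false)).1 = i ∨ (w.getD p (0, false)).1 = i + 1) →
    z.getD p (0, false) = w.getD p (0, false)) ∧
  IsF1base (proj i w) (proj i z)

/-- `IsEgen i w z` : `z = E_i(w)`. -/
def IsEgen (i : ℕ) (w z : PWord) : Prop :=
  w.length = z.length ∧ Canonical z ∧
  (∀ p, ((w.getD p (0, false)).1 = i ∨ (w.getD p (0, false)).1 = i + 1) ↔
        ((z.getD p (0, false)).1 = i ∨ (z.getD p (0, false)).1 = i + 1)) ∧
  (∀ p, p < w.length →
    ¬((w.getD p (0, false)).1 = i ∨ (w.getD p (0, false)).1 = i + 1) →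
    z.getD p (0, false) = w.getD p (0, false)) ∧
  IsE1base (proj i w) (proj i z)

/-! ### String-length statistics -/

/-- `k`-fold iteration of a relation. -/
def iterRel {α : Type*} (R : α → α → Prop) : ℕ → α → α → Prop
  | 0, a, b => a = b
  | (k + 1), a, c => ∃ b, R a b ∧ iterRel R k b c

/-- The supremum of the lengths of `R`-chains starting at `a`. -/
noncomputable def distRel {α : Type*} (R : α → α → Prop) (a : α) : ℕ :=
  sSup {k | ∃ b, iterRel R k a b}

/-- `ε_i(w)`: total distance to the top of the `{i, i'}`-string through `w`. -/
noncomputable def epsW (i : ℕ) (w : PWord) : ℕ :=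
  distRel (fun a b => IsEgen i a b ∨ IsEprime i a b) w

/-- `φ_i(w)`: total distance to the bottom of the `{i, i'}`-string. -/
noncomputable def phiW (i : ℕ) (w : PWord) : ℕ :=
  distRel (fun a b => IsFgen i a b ∨ IsFprime i a b) w

/-- `ε̂_i(w)`: number of unprimed raising steps available. -/
noncomputable def epshW (i : ℕ) (w : PWord) : ℕ := distRel (IsEgen i) w

/-- `φ̂_i(w)`: number of unprimed lowering steps available. -/
noncomputable def phihW (i : ℕ) (w : PWord) : ℕ := distRel (IsFgen i) w

/-- `ε'_i(w)`: number of primed raising steps available. -/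
noncomputable def epspW (i : ℕ) (w : PWord) : ℕ := distRel (IsEprime i) w

/-- `φ'_i(w)`: number of primed lowering steps available. -/
noncomputable def phipW (i : ℕ) (w : PWord) : ℕ := distRel (IsFprime i) w

/-! ### Shifted semistandard tableaux of straight shape -/

/-- A (straight-shape) shifted tableau: its list of rows, from top to bottom;
row `r` (0-indexed) is shifted `r` steps to the right. -/
structure ShTab where
  rows : List PWord

namespace ShTab

/-- The row reading word: rows concatenated from bottom to top. -/
def readingWord (T : ShTab) : PWord := T.rows.reverse.flatten

/-- The shape of `T`: the list of row lengths. -/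
def shape (T : ShTab) : List ℕ := T.rows.map List.length

/-- The entry of `T` in row `r` and absolute column `c` (0-indexed), if any. -/
def entry? (T : ShTab) (r c : ℕ) : Option PLetter :=
  if c < r then none else (T.rows.getD r [])[c - r]?

end ShTab

/-- Adjacent entries in a row: weakly increasing, with equality only allowed
for unprimed letters. -/
def rowLE (a b : PLetter) : Prop := lval a < lval b ∨ (a = b ∧ a.2 = false)

/-- Adjacent entries in a column: weakly increasing, with equality only
allowed for primed letters. -/
def colLE (a b : PLetter) : Prop := lval a < lval b ∨ (a = b ∧ a.2 = true)

/-- `T` is a shifted semistandard tableau of straight shifted shape, in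
canonical form. -/
def ShTab.Semistandard (T : ShTab) : Prop :=
  List.Chain' (fun a b => b < a) T.shape ∧
  (∀ row ∈ T.rows, row ≠ []) ∧
  (∀ row ∈ T.rows, List.Chain' rowLE row) ∧
  (∀ r c a b, T.entry? r c = some a → T.entry? (r + 1) c = some b → colLE a b) ∧
  Canonical T.readingWord

/-! ### Operators on tableaux (via the reading word; the operators of GLP are
coplactic, and on skew tableaux act on the reading word, preserving the shape). -/

/-- `T' = F_i(T)`. -/
def IsFTab (i : ℕ) (T T' : ShTab) : Prop :=
  T'.shape = T.shape ∧ T'.Semistandard ∧ IsFgen i T.readingWord T'.readingWord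

/-- `T' = F_i'(T)`. -/
def IsFpTab (i : ℕ) (T T' : ShTab) : Prop :=
  T'.shape = T.shape ∧ T'.Semistandard ∧ IsFprime i T.readingWord T'.readingWord

/-- `T' = E_i(T)`. -/
def IsETab (i : ℕ) (T T' : ShTab) : Prop :=
  T'.shape = T.shape ∧ T'.Semistandard ∧ IsEgen i T.readingWord T'.readingWord

/-- `T' = E_i'(T)`. -/
def IsEpTab (i : ℕ) (T T' : ShTab) : Prop :=
  T'.shape = T.shape ∧ T'.Semistandard ∧ IsEprime i T.readingWord T'.readingWord


/-! ### Auxiliary development -/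

namespace PrimedSquare

/-- The letter at position `p`. -/
def letterAt (u : PWord) (p : ℕ) : PLetter := u.getD p (0, false)

/-- The sorting key of position `p`. -/
def key (u : PWord) (p : ℕ) : ℕ :=
  lval (letterAt u p) * (2 * u.length)
    + (if (letterAt u p).2 then u.length - p else u.length + p)

/-- Count of positions `< n` satisfying `P`. -/
def cnt (n : ℕ) (P : ℕ → Prop) [DecidablePred P] : ℕ :=
  (Finset.range n).filter P |>.card

lemma base_lt {B a a' b b' : ℕ} (hb : b < B) (hb' : b' < B) :
    a * B + b < a' * B + b' ↔ (a < a' ∨ (a = a' ∧ b < b')) := by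
  have e : ∀ x : ℕ, (x + 1) * B = x * B + B := fun x => by ring
  constructor
  · intro h
    rcases Nat.lt_trichotomy a a' with h1 | h1 | h1
    · exact Or.inl h1
    · exact Or.inr ⟨h1, by subst h1; omega⟩
    · exfalso
      have h2 : (a' + 1) * B ≤ a * B := Nat.mul_le_mul_right _ h1
      rw [e] at h2; omega
  · rintro (h | ⟨rfl, h⟩)
    · have h2 : (a + 1) * B ≤ a' * B := Nat.mul_le_mul_right _ h
      rw [e] at h2; omega
    · omega

lemma lval_le (l : PLetter) : lval l ≤ 2 * l.1 := by
  unfold lval; split <;> omega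

lemma lval_ge (l : PLetter) (h : 1 ≤ l.1) : 2 * l.1 - 1 ≤ lval l := by
  unfold lval; split <;> omega

lemma eq_of_lval_eq {a b : PLetter} (ha : 1 ≤ a.1) (hb : 1 ≤ b.1)
    (h : lval a = lval b) : a = b := by
  obtain ⟨x, xb⟩ := a; obtain ⟨y, yb⟩ := b
  simp only [lval] at h
  cases xb <;> cases yb <;> simp_all <;> omega

end PrimedSquare
namespace PrimedSquare

/-- All letters have value at least 1. -/
def GoodW (u : PWord) : Prop := ∀ p < u.length, 1 ≤ (letterAt u p).1

lemma cnt_list (n : ℕ) (P : ℕ → Prop) [DecidablePred P] :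
    cnt n P = ((List.range n).filter (fun q => decide (P q))).length := rfl

lemma cnt_congr (n : ℕ) (P Q : ℕ → Prop) [DecidablePred P] [DecidablePred Q]
    (h : ∀ q < n, (P q ↔ Q q)) : cnt n P = cnt n Q := by
  unfold cnt
  congr 1
  apply Finset.filter_congr
  intro x hx
  exact h x (Finset.mem_range.1 hx)

lemma cnt_mono (n : ℕ) (P Q : ℕ → Prop) [DecidablePred P] [DecidablePred Q]
    (h : ∀ q < n, P q → Q q) : cnt n P ≤ cnt n Q := by
  apply Finset.card_le_card
  intro x hx
  simp only [Finset.mem_filter, Finset.mem_range] at hx ⊢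
  exact ⟨hx.1, h x hx.1 hx.2⟩

lemma cnt_strict (n : ℕ) (P Q : ℕ → Prop) [DecidablePred P] [DecidablePred Q]
    (h : ∀ q < n, P q → Q q) (x : ℕ) (hx : x < n) (hQ : Q x) (hP : ¬ P x) :
    cnt n P < cnt n Q := by
  apply Finset.card_lt_card
  rw [Finset.ssubset_iff_of_subset]
  · exact ⟨x, by simp [Finset.mem_filter, Finset.mem_range, hx, hQ], by simp [hP]⟩
  · intro y hy
    simp only [Finset.mem_filter, Finset.mem_range] at hy ⊢
    exact ⟨hy.1, h y hy.1 hy.2⟩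

lemma cnt_lt (n : ℕ) (P : ℕ → Prop) [DecidablePred P] (x : ℕ) (hx : x < n) (hP : ¬ P x) :
    cnt n P < n := by
  have : cnt n P < cnt n (fun _ => True) := cnt_strict n P _ (fun _ _ _ => trivial) x hx trivial hP
  simpa [cnt] using this

lemma cnt_comp_bij (n : ℕ) (f : ℕ → ℕ) (hf : ∀ p < n, f p < n)
    (hinj : ∀ p < n, ∀ q < n, f p = f q → p = q) (P : ℕ → Prop) [DecidablePred P] :
    cnt n (fun p => P (f p)) = cnt n P := by
  have hio : Set.InjOn f ↑(Finset.range n) := by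
    intro a ha b hb hab
    exact hinj a (Finset.mem_range.1 ha) b (Finset.mem_range.1 hb) hab
  have himg : (Finset.range n).image f = Finset.range n := by
    apply Finset.eq_of_subset_of_card_le
    · intro x hx
      obtain ⟨p, hp, rfl⟩ := Finset.mem_image.1 hx
      exact Finset.mem_range.2 (hf p (Finset.mem_range.1 hp))
    · rw [Finset.card_image_of_injOn hio]
  unfold cnt
  conv_rhs => rw [← himg]
  rw [Finset.filter_image]
  rw [Finset.card_image_of_injOn (hio.mono (Finset.filter_subset _ _))]

lemma length_filter_range (u : PWord) (pb : PLetter → Bool) :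
    ((List.range u.length).filter (fun q => pb (letterAt u q))).length
      = (u.filter pb).length := by
  induction u with
  | nil => simp
  | cons l t ih =>
    rw [List.length_cons, List.range_succ_eq_map, List.filter_cons, List.filter_map]
    have hc : ((fun q => pb (letterAt (l :: t) q)) ∘ Nat.succ) = fun q => pb (letterAt t q) := by
      funext q; rfl
    rw [hc]
    have h0 : letterAt (l :: t) 0 = l := rfl
    rw [h0, List.filter_cons]
    by_cases hb : pb l = true
    · simp [hb, ih]
    · simp only [Bool.not_eq_true] at hb
      simp [hb, ih]

lemma wtv_eq_cnt (u : PWord) (i : ℕ) :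
    wtv u i = cnt u.length (fun q => (letterAt u q).1 = i) := by
  rw [cnt_list, length_filter_range u (fun l => decide (l.1 = i))]
  rfl

/-- `AA u i`: the number of letters of value `< i`. -/
def AA (u : PWord) (i : ℕ) : ℕ := (u.filter (fun l => decide (l.1 < i))).length

lemma AA_eq_cnt (u : PWord) (i : ℕ) :
    AA u i = cnt u.length (fun q => (letterAt u q).1 < i) := by
  rw [cnt_list, length_filter_range u (fun l => decide (l.1 < i))]
  rfl

lemma AA_zero (u : PWord) : AA u 0 = 0 := by simp [AA]

lemma AA_succ (u : PWord) (i : ℕ) : AA u (i + 1) = AA u i + wtv u i := by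
  induction u with
  | nil => simp [AA, wtv]
  | cons l t ih =>
    simp only [AA, wtv, List.filter_cons] at ih ⊢
    by_cases h1 : l.1 < i
    · have h2 : l.1 < i + 1 := by omega
      have h3 : ¬ l.1 = i := by omega
      simp [h1, h2, h3, show l.1 ≤ i by omega] at ih ⊢; omega
    · by_cases h3 : l.1 = i
      · have h2 : l.1 < i + 1 := by omega
        simp [h1, h2, h3, show l.1 ≤ i by omega] at ih ⊢; omega
      · have h2 : ¬ l.1 < i + 1 := by omega
        simp [h1, h2, h3, show ¬ l.1 ≤ i by omega] at ih ⊢; omega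

lemma AA_mono (u : PWord) {i j : ℕ} (h : i ≤ j) : AA u i ≤ AA u j := by
  induction j with
  | zero =>
    have : i = 0 := by omega
    simp [this]
  | succ j ihj =>
    rcases Nat.lt_or_ge i (j+1) with h1 | h1
    · have := ihj (by omega)
      rw [AA_succ]; omega
    · have : i = j + 1 := by omega
      simp [this]

lemma AA_congr (u u' : PWord) (h : ∀ j, wtv u j = wtv u' j) (i : ℕ) :
    AA u i = AA u' i := by
  induction i with
  | zero => simp [AA_zero]
  | succ i ih => rw [AA_succ, AA_succ, ih, h]

lemma wtv_zero_notval (u : PWord) (j : ℕ) (h : wtv u j = 0) :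
    ∀ p < u.length, (letterAt u p).1 ≠ j := by
  intro p hp hval
  have hmem : letterAt u p ∈ u := by
    rw [letterAt, List.getD_eq_getElem u _ hp]
    exact List.getElem_mem hp
  have : (letterAt u p) ∈ u.filter (fun l => decide (l.1 = j)) := by
    rw [List.mem_filter]
    exact ⟨hmem, by simp [hval]⟩
  rw [wtv, List.length_eq_zero_iff] at h
  rw [h] at this
  exact absurd this List.not_mem_nil

end PrimedSquare
namespace PrimedSquare

/-- The comparison governing `stdRank`. -/
def BRel (u : PWord) (p q : ℕ) : Prop :=
  lval (letterAt u q) < lval (letterAt u p) ∨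
    (lval (letterAt u q) = lval (letterAt u p) ∧
      (if (letterAt u p).2 then p < q else q < p))

instance (u : PWord) (p q : ℕ) : Decidable (BRel u p q) := by
  unfold BRel; infer_instance

lemma stdRank_eq_cnt (u : PWord) (p : ℕ) :
    stdRank u p = cnt u.length (fun q => BRel u p q) := rfl

lemma key_lt_iff_BRel (u : PWord) (hg : GoodW u) {p q : ℕ}
    (hp : p < u.length) (hq : q < u.length) :
    key u q < key u p ↔ BRel u p q := by
  have hn1 : 1 ≤ u.length := by omega
  have hb : ∀ r : ℕ, r < u.length →
      (if (letterAt u r).2 then u.length - r else u.length + r) < 2 * u.length := by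
    intro r hr; split <;> omega
  rw [key, key, base_lt (hb q hq) (hb p hp), BRel]
  constructor
  · rintro (h | ⟨he, h2⟩)
    · exact Or.inl h
    · refine Or.inr ⟨he, ?_⟩
      have hle : letterAt u q = letterAt u p := eq_of_lval_eq (hg q hq) (hg p hp) he
      rw [hle] at h2
      by_cases hsp : (letterAt u p).2 = true
      · simp only [hsp, if_true] at h2 ⊢; omega
      · rw [Bool.not_eq_true] at hsp
        simp only [hsp, Bool.false_eq_true, if_false] at h2 ⊢; omega
  · rintro (h | ⟨he, h2⟩)
    · exact Or.inl h
    · refine Or.inr ⟨he, ?_⟩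
      have hle : letterAt u q = letterAt u p := eq_of_lval_eq (hg q hq) (hg p hp) he
      rw [hle]
      by_cases hsp : (letterAt u p).2 = true
      · simp only [hsp, if_true] at h2 ⊢; omega
      · rw [Bool.not_eq_true] at hsp
        simp only [hsp, Bool.false_eq_true, if_false] at h2 ⊢; omega

lemma stdRank_eq_key_cnt (u : PWord) (hg : GoodW u) {p : ℕ} (hp : p < u.length) :
    stdRank u p = cnt u.length (fun q => key u q < key u p) := by
  rw [stdRank_eq_cnt]
  exact cnt_congr _ _ _ (fun q hq => (key_lt_iff_BRel u hg hp hq).symm)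

lemma key_inj (u : PWord) (hg : GoodW u) {p q : ℕ}
    (hp : p < u.length) (hq : q < u.length) (h : key u p = key u q) : p = q := by
  have hn1 : 1 ≤ u.length := by omega
  have hb : ∀ r : ℕ, r < u.length →
      (if (letterAt u r).2 then u.length - r else u.length + r) < 2 * u.length := by
    intro r hr; split <;> omega
  have h1 : ¬ key u p < key u q := by omega
  have h2 : ¬ key u q < key u p := by omega
  rw [key, key, base_lt (hb p hp) (hb q hq)] at h1
  rw [key, key, base_lt (hb q hq) (hb p hp)] at h2
  push_neg at h1 h2
  have he : lval (letterAt u p) = lval (letterAt u q) := le_antisymm h2.1 h1.1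
  have hle : letterAt u p = letterAt u q := eq_of_lval_eq (hg p hp) (hg q hq) he
  have h3 := h1.2 he
  have h4 := h2.2 he.symm
  rw [hle] at h3 h4
  by_cases hsp : (letterAt u q).2 = true
  · simp only [hsp, if_true] at h3 h4; omega
  · rw [Bool.not_eq_true] at hsp
    simp only [hsp, Bool.false_eq_true, if_false] at h3 h4; omega

lemma rank_lt_of_key_lt (u : PWord) (hg : GoodW u) {p q : ℕ}
    (hp : p < u.length) (hq : q < u.length) (h : key u p < key u q) :
    stdRank u p < stdRank u q := by
  rw [stdRank_eq_key_cnt u hg hp, stdRank_eq_key_cnt u hg hq]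
  exact cnt_strict _ _ _ (fun r _ hr => lt_trans hr h) p hp h (lt_irrefl _)

lemma rank_lt_iff (u : PWord) (hg : GoodW u) {p q : ℕ}
    (hp : p < u.length) (hq : q < u.length) :
    stdRank u p < stdRank u q ↔ key u p < key u q := by
  constructor
  · intro h
    by_contra hk
    rcases Nat.lt_or_ge (key u q) (key u p) with hk2 | hk2
    · exact absurd (rank_lt_of_key_lt u hg hq hp hk2) (by omega)
    · have : key u p = key u q := by omega
      have : stdRank u p = stdRank u q := by
        rw [stdRank_eq_key_cnt u hg hp, stdRank_eq_key_cnt u hg hq]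
        exact cnt_congr _ _ _ (fun r _ => by rw [this])
      omega
  · exact rank_lt_of_key_lt u hg hp hq

lemma rank_inj (u : PWord) (hg : GoodW u) {p q : ℕ}
    (hp : p < u.length) (hq : q < u.length) (h : stdRank u p = stdRank u q) : p = q := by
  by_contra hne
  rcases Nat.lt_trichotomy (key u p) (key u q) with hk | hk | hk
  · exact absurd (rank_lt_of_key_lt u hg hp hq hk) (by omega)
  · exact hne (key_inj u hg hp hq hk)
  · exact absurd (rank_lt_of_key_lt u hg hq hp hk) (by omega)

lemma rank_lt_len (u : PWord) (hg : GoodW u) {p : ℕ} (hp : p < u.length) :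
    stdRank u p < u.length := by
  rw [stdRank_eq_key_cnt u hg hp]
  exact cnt_lt _ _ p hp (lt_irrefl _)

end PrimedSquare
namespace PrimedSquare

lemma canonizeAux_eq_iff (u : PWord) : ∀ seen : List ℕ,
    canonizeAux seen u = u ↔
      ∀ p < u.length, ((letterAt u p).1 ∉ seen ∧
        ∀ q < p, (letterAt u q).1 ≠ (letterAt u p).1) → (letterAt u p).2 = false := by
  induction u with
  | nil => intro seen; simp [canonizeAux]
  | cons l t ih =>
    intro seen
    rw [canonizeAux, List.cons_eq_cons]
    constructor
    · rintro ⟨hhd, htl⟩ p hp hcond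
      match p with
      | 0 =>
        have hns : l.1 ∉ seen := hcond.1
        rw [if_neg hns] at hhd
        have : l.2 = false := by
          have := congrArg Prod.snd hhd
          simpa using this.symm
        exact this
      | (p' + 1) =>
        refine (ih (l.1 :: seen)).mp htl p' (by simpa using hp) ⟨?_, ?_⟩
        · intro hmem
          rcases List.mem_cons.1 hmem with h | h
          · exact hcond.2 0 (Nat.succ_pos _) h.symm
          · exact hcond.1 h
        · intro q hq
          exact hcond.2 (q + 1) (by omega)
    · intro h
      constructor
      · by_cases hns : l.1 ∈ seen
        · rw [if_pos hns]
        · rw [if_neg hns]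
          have h2 := h 0 (Nat.succ_pos _) ⟨hns, by omega⟩
          have : letterAt (l :: t) 0 = l := rfl
          rw [this] at h2
          exact Prod.ext rfl h2.symm
      · refine (ih (l.1 :: seen)).mpr ?_
        intro p hp hcond
        refine h (p + 1) (by simpa using hp) ⟨?_, ?_⟩
        · intro hmem
          exact hcond.1 (List.mem_cons.2 (Or.inr hmem))
        · intro q hq
          match q with
          | 0 =>
            intro heq
            exact hcond.1 (List.mem_cons.2 (Or.inl heq.symm))
          | (q' + 1) =>
            exact hcond.2 q' (by omega)

lemma canonical_iff (u : PWord) :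
    Canonical u ↔ ∀ p < u.length,
      (∀ q < p, (letterAt u q).1 ≠ (letterAt u p).1) → (letterAt u p).2 = false := by
  rw [Canonical, canonize, canonizeAux_eq_iff]
  constructor
  · intro h p hp hc; exact h p hp ⟨by simp, hc⟩
  · intro h p hp hc; exact h p hp hc.2

/-- Interval bounds for the rank of a letter, in terms of its value. -/
lemma rank_interval (u : PWord) (hg : GoodW u) {p : ℕ} (hp : p < u.length) :
    AA u ((letterAt u p).1) ≤ stdRank u p ∧
      stdRank u p < AA u ((letterAt u p).1 + 1) := by
  have hi1 : 1 ≤ (letterAt u p).1 := hg p hp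
  rw [stdRank_eq_key_cnt u hg hp, AA_eq_cnt, AA_eq_cnt]
  constructor
  · apply cnt_mono
    intro q hq hql
    -- value < i implies key smaller
    have h1 : lval (letterAt u q) ≤ 2 * (letterAt u q).1 := lval_le _
    have h2 : 2 * (letterAt u p).1 - 1 ≤ lval (letterAt u p) := lval_ge _ hi1
    have hlv : lval (letterAt u q) < lval (letterAt u p) := by omega
    rw [key, key]
    have hb : ∀ r : ℕ, r < u.length →
        (if (letterAt u r).2 then u.length - r else u.length + r) < 2 * u.length := by
      intro r hr; split <;> omega
    rw [base_lt (hb q hq) (hb p hp)]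
    exact Or.inl hlv
  · refine cnt_strict _ (fun q => key u q < key u p)
      (fun q => (letterAt u q).1 < (letterAt u p).1 + 1) ?_ p hp (by omega) (by simp)
    intro q hq hk
    have hb : ∀ r : ℕ, r < u.length →
        (if (letterAt u r).2 then u.length - r else u.length + r) < 2 * u.length := by
      intro r hr; split <;> omega
    rw [key, key, base_lt (hb q hq) (hb p hp)] at hk
    have h1 : 2 * (letterAt u q).1 - 1 ≤ lval (letterAt u q) := lval_ge _ (hg q hq)
    have h2 : lval (letterAt u p) ≤ 2 * (letterAt u p).1 := lval_le _
    have hq1 : 1 ≤ (letterAt u q).1 := hg q hq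
    rcases hk with h | ⟨h, _⟩ <;> omega

lemma val_le_of_rank_le (u : PWord) (hg : GoodW u) {p q : ℕ}
    (hp : p < u.length) (hq : q < u.length) (h : stdRank u p ≤ stdRank u q) :
    (letterAt u p).1 ≤ (letterAt u q).1 := by
  by_contra hc
  push_neg at hc
  have h1 := rank_interval u hg hp
  have h2 := rank_interval u hg hq
  have h3 : AA u ((letterAt u q).1 + 1) ≤ AA u ((letterAt u p).1) := AA_mono u (by omega)
  omega

/-- In a canonical word, a letter is primed iff its rank is less than the rank
of the leftmost letter with the same value. -/
lemma prm_iff (u : PWord) (hc : Canonical u) (hg : GoodW u) {p : ℕ} (hp : p < u.length) :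
    ((letterAt u p).2 = true ↔ stdRank u p <
      stdRank u (sInf {m | m < u.length ∧ (letterAt u m).1 = (letterAt u p).1})) := by
  set S : Set ℕ := {m | m < u.length ∧ (letterAt u m).1 = (letterAt u p).1} with hS
  have hSne : S.Nonempty := ⟨p, hp, rfl⟩
  set p₀ := sInf S with hp₀
  have hmem : p₀ ∈ S := Nat.sInf_mem hSne
  have hp₀lt : p₀ < u.length := hmem.1
  have hp₀val : (letterAt u p₀).1 = (letterAt u p).1 := hmem.2
  have hp₀le : p₀ ≤ p := Nat.sInf_le ⟨hp, rfl⟩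
  have hfst : (letterAt u p₀).2 = false := by
    refine (canonical_iff u).mp hc p₀ hp₀lt ?_
    intro q hq heq
    have : q ∈ S := ⟨by omega, by rw [heq, hp₀val]⟩
    exact absurd (Nat.sInf_le this) (by omega)
  have hb : ∀ r : ℕ, r < u.length →
      (if (letterAt u r).2 then u.length - r else u.length + r) < 2 * u.length := by
    intro r hr; split <;> omega
  have hi1 : 1 ≤ (letterAt u p).1 := hg p hp
  constructor
  · intro hprm
    have hne : p ≠ p₀ := by
      intro h; rw [h, hfst] at hprm; simp at hprm
    apply rank_lt_of_key_lt u hg hp hp₀lt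
    rw [key, key, base_lt (hb p hp) (hb p₀ hp₀lt)]
    left
    rw [lval, lval, hprm, hfst, hp₀val]
    simp only [if_true, Bool.false_eq_true, if_false]
    omega
  · intro hrk
    by_contra hprm
    rw [Bool.not_eq_true] at hprm
    rcases Nat.lt_or_ge p₀ p with hlt | hge
    · have : stdRank u p₀ < stdRank u p := by
        apply rank_lt_of_key_lt u hg hp₀lt hp
        rw [key, key, base_lt (hb p₀ hp₀lt) (hb p hp)]
        right
        constructor
        · rw [lval, lval, hprm, hfst, hp₀val]
        · rw [hprm, hfst]
          simp only [Bool.false_eq_true, if_false]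
          omega
      omega
    · have : p = p₀ := by omega
      rw [this] at hrk; omega

/-- Descending property of primed letters within a class, for canonical words. -/
lemma cls_desc (u : PWord) (hc : Canonical u) (hg : GoodW u) {p q : ℕ}
    (hp : p < u.length) (hq : q < u.length)
    (hval : (letterAt u q).1 = (letterAt u p).1)
    (h1 : stdRank u p < stdRank u q)
    (h2 : stdRank u q <
      stdRank u (sInf {m | m < u.length ∧ (letterAt u m).1 = (letterAt u p).1})) :
    q < p := by
  have hprq : (letterAt u q).2 = true := by
    rw [prm_iff u hc hg hq]
    have : {m | m < u.length ∧ (letterAt u m).1 = (letterAt u q).1}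
        = {m | m < u.length ∧ (letterAt u m).1 = (letterAt u p).1} := by
      rw [hval]
    rw [this]; exact h2
  have hprp : (letterAt u p).2 = true := by
    rw [prm_iff u hc hg hp]; omega
  have hk := (rank_lt_iff u hg hp hq).mp h1
  have hb : ∀ r : ℕ, r < u.length →
      (if (letterAt u r).2 then u.length - r else u.length + r) < 2 * u.length := by
    intro r hr; split <;> omega
  rw [key, key, base_lt (hb p hp) (hb q hq)] at hk
  have hlv : lval (letterAt u p) = lval (letterAt u q) := by
    rw [lval, lval, hprp, hprq, hval]
  rcases hk with h | ⟨_, h⟩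
  · omega
  · rw [hprp, hprq] at h
    simp only [if_true] at h
    omega

/-- Ascending property of unprimed letters within a class, for canonical words. -/
lemma cls_asc (u : PWord) (hc : Canonical u) (hg : GoodW u) {p q : ℕ}
    (hp : p < u.length) (hq : q < u.length)
    (hval : (letterAt u q).1 = (letterAt u p).1)
    (h1 : stdRank u p < stdRank u q)
    (h2 : stdRank u (sInf {m | m < u.length ∧ (letterAt u m).1 = (letterAt u p).1})
      ≤ stdRank u p) :
    p < q := by
  have hprp : (letterAt u p).2 = false := by
    rw [← Bool.not_eq_true, prm_iff u hc hg hp]; omega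
  have hprq : (letterAt u q).2 = false := by
    rw [← Bool.not_eq_true, prm_iff u hc hg hq]
    have : {m | m < u.length ∧ (letterAt u m).1 = (letterAt u q).1}
        = {m | m < u.length ∧ (letterAt u m).1 = (letterAt u p).1} := by
      rw [hval]
    rw [this]; omega
  have hk := (rank_lt_iff u hg hp hq).mp h1
  have hb : ∀ r : ℕ, r < u.length →
      (if (letterAt u r).2 then u.length - r else u.length + r) < 2 * u.length := by
    intro r hr; split <;> omega
  rw [key, key, base_lt (hb p hp) (hb q hq)] at hk
  have hlv : lval (letterAt u p) = lval (letterAt u q) := by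
    rw [lval, lval, hprp, hprq, hval]
  rcases hk with h | ⟨_, h⟩
  · omega
  · rw [hprp, hprq] at h
    simp only [Bool.false_eq_true, if_false] at h
    omega

end PrimedSquare
namespace PrimedSquare

lemma good_of_wtv0 (u : PWord) (h : wtv u 0 = 0) : GoodW u := by
  intro p hp
  have := wtv_zero_notval u 0 h p hp
  omega

lemma std_length (u : PWord) : (std u).length = u.length := by simp [std]

lemma length_eq_of_std_eq {u u' : PWord} (h : std u = std u') : u.length = u'.length := by
  have := congrArg List.length h
  simpa [std] using this

lemma stdRank_eq_of_std_eq {u u' : PWord} (h : std u = std u') {p : ℕ} (hp : p < u.length) :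
    stdRank u p = stdRank u' p := by
  have h1 : (std u)[p]'(by rw [std_length]; exact hp) = stdRank u p := by
    simp [std]
  have h2 : (std u')[p]'(by rw [std_length, ← length_eq_of_std_eq h]; exact hp)
      = stdRank u' p := by
    simp [std]
  rw [← h1, ← h2]
  congr 1

lemma std_eq_of_ranks {u u' : PWord} (hl : u.length = u'.length)
    (h : ∀ p < u.length, stdRank u p = stdRank u' p) : std u = std u' := by
  apply List.ext_getElem (by simp [std, hl])
  intro p h1 h2
  simp only [std, List.getElem_map, List.getElem_range]
  exact h p (by simpa [std] using h1)

/-- **Uniqueness**: a canonical word is determined by its standardization and weight. -/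
lemma canon_det (u u' : PWord) (hcu : Canonical u) (hcu' : Canonical u')
    (h0 : wtv u 0 = 0) (hstd : std u = std u') (hw : ∀ j, wtv u j = wtv u' j) :
    u = u' := by
  have h0' : wtv u' 0 = 0 := by rw [← hw]; exact h0
  have hg := good_of_wtv0 u h0
  have hg' := good_of_wtv0 u' h0'
  have hl : u.length = u'.length := length_eq_of_std_eq hstd
  have hrk : ∀ p < u.length, stdRank u p = stdRank u' p :=
    fun p hp => stdRank_eq_of_std_eq hstd hp
  have hAA : ∀ i, AA u i = AA u' i := AA_congr u u' hw
  have hval : ∀ p < u.length, (letterAt u p).1 = (letterAt u' p).1 := by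
    intro p hp
    have hp' : p < u'.length := by omega
    have b1 := rank_interval u hg hp
    have b2 := rank_interval u' hg' hp'
    rw [← hrk p hp, ← hAA, ← hAA] at b2
    by_contra hne
    rcases Nat.lt_or_ge (letterAt u p).1 (letterAt u' p).1 with hlt | hge
    · have := AA_mono u (show (letterAt u p).1 + 1 ≤ (letterAt u' p).1 by omega)
      omega
    · have := AA_mono u (show (letterAt u' p).1 + 1 ≤ (letterAt u p).1 by omega)
      omega
  have hprm : ∀ p < u.length, (letterAt u p).2 = (letterAt u' p).2 := by
    intro p hp
    have hp' : p < u'.length := by omega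
    have i1 := prm_iff u hcu hg hp
    have i2 := prm_iff u' hcu' hg' hp'
    have hsets : {m | m < u'.length ∧ (letterAt u' m).1 = (letterAt u' p).1}
        = {m | m < u.length ∧ (letterAt u m).1 = (letterAt u p).1} := by
      ext m
      simp only [Set.mem_setOf_eq]
      constructor
      · rintro ⟨hm, hv⟩
        exact ⟨by omega, by rw [hval m (by omega), hval p hp, hv]⟩
      · rintro ⟨hm, hv⟩
        exact ⟨by omega, by rw [← hval m hm, ← hval p hp, hv]⟩
    rw [hsets] at i2
    set m₀ := sInf {m | m < u.length ∧ (letterAt u m).1 = (letterAt u p).1} with hm₀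
    have hm₀mem : m₀ ∈ {m | m < u.length ∧ (letterAt u m).1 = (letterAt u p).1} :=
      Nat.sInf_mem ⟨p, hp, rfl⟩
    rw [← hrk p hp, ← hrk m₀ hm₀mem.1] at i2
    rw [← i2] at i1
    rcases Bool.eq_false_or_eq_true (letterAt u p).2 with h | h <;>
      rcases Bool.eq_false_or_eq_true (letterAt u' p).2 with h' | h' <;>
        simp_all
  apply List.ext_getElem hl
  intro p h1 h2
  have e1 : u[p] = letterAt u p := (List.getD_eq_getElem u _ h1).symm
  have e2 : u'[p] = letterAt u' p := (List.getD_eq_getElem u' _ h2).symm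
  rw [e1, e2]
  exact Prod.ext (hval p h1) (hprm p h1)

/-- **Construction**: build a canonical word with prescribed ranks, values and primes. -/
lemma build (n : ℕ) (rk vl : ℕ → ℕ) (prm : ℕ → Bool)
    (hrk_lt : ∀ p < n, rk p < n)
    (hrk_inj : ∀ p < n, ∀ q < n, rk p = rk q → p = q)
    (hvl_pos : ∀ p < n, 1 ≤ vl p)
    (hvl_mono : ∀ p < n, ∀ q < n, rk p < rk q → vl p ≤ vl q)
    (hprm_min : ∀ p < n, (∀ q < p, vl q ≠ vl p) → prm p = false)
    (hdesc : ∀ p < n, ∀ q < n, vl p = vl q → prm p = true → prm q = true →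
      rk p < rk q → q < p)
    (hasc : ∀ p < n, ∀ q < n, vl p = vl q → prm p = false → prm q = false →
      rk p < rk q → p < q)
    (hpf : ∀ p < n, ∀ q < n, vl p = vl q → prm p = true → prm q = false → rk p < rk q) :
    ∃ u : PWord, u.length = n ∧ Canonical u ∧
      (∀ p < n, letterAt u p = (vl p, prm p)) ∧
      (∀ p < n, stdRank u p = rk p) := by
  set u : PWord := (List.range n).map (fun p => (vl p, prm p)) with hu
  have hlen : u.length = n := by simp [hu]
  have hlet : ∀ p < n, letterAt u p = (vl p, prm p) := by
    intro p hp
    rw [letterAt, List.getD_eq_getElem _ _ (by omega)]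
    simp [hu]
  have hg : GoodW u := by
    intro p hp
    rw [hlen] at hp
    rw [hlet p hp]
    exact hvl_pos p hp
  have hcan : Canonical u := by
    rw [canonical_iff]
    intro p hp hcond
    rw [hlen] at hp
    rw [hlet p hp]
    apply hprm_min p hp
    intro q hq
    have := hcond q hq
    rw [hlet q (by omega), hlet p hp] at this
    simpa using this
  have hmain : ∀ a < n, ∀ b < n, rk a < rk b → key u a < key u b := by
    intro a ha b hb hab
    have hn1 : 1 ≤ n := by omega
    rw [key, key, hlet a ha, hlet b hb, hlen]
    have hba : (if ((vl a : ℕ), prm a).2 then n - a else n + a) < 2 * n := by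
      dsimp only; split <;> omega
    have hbb : (if ((vl b : ℕ), prm b).2 then n - b else n + b) < 2 * n := by
      dsimp only; split <;> omega
    rw [base_lt hba hbb]
    dsimp only
    have hvle : vl a ≤ vl b := hvl_mono a ha b hb hab
    rcases Nat.lt_or_ge (vl a) (vl b) with hlt | hge
    · left
      have l1 : lval (vl a, prm a) ≤ 2 * (vl a, prm a).1 := lval_le _
      have l2 : 2 * ((vl b : ℕ), prm b).1 - 1 ≤ lval (vl b, prm b) := lval_ge _ (hvl_pos b hb)
      have l3 := hvl_pos a ha
      dsimp only at l1 l2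
      omega
    · have hveq : vl a = vl b := by omega
      rcases Bool.eq_false_or_eq_true (prm a) with hpa | hpa <;>
        rcases Bool.eq_false_or_eq_true (prm b) with hpb | hpb
      · -- both primed
        have := hdesc a ha b hb hveq hpa hpb hab
        right
        constructor
        · simp [lval, hpa, hpb, hveq]
        · simp only [hpa, hpb, if_true]
          omega
      · -- a primed, b unprimed
        left
        have := hvl_pos a ha
        simp only [lval, hpa, hpb, if_true, Bool.false_eq_true, if_false, hveq]
        omega
      · -- a unprimed, b primed: impossible
        exact absurd (hpf b hb a ha hveq.symm hpb hpa) (by omega)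
      · -- both unprimed
        have := hasc a ha b hb hveq hpa hpb hab
        right
        constructor
        · simp [lval, hpa, hpb, hveq]
        · simp only [hpa, hpb, Bool.false_eq_true, if_false]
          omega
  have hkiff : ∀ p < n, ∀ q < n, (key u q < key u p ↔ rk q < rk p) := by
    intro p hp q hq
    constructor
    · intro hk
      by_contra hc
      rcases Nat.lt_or_ge (rk p) (rk q) with h2 | h2
      · exact absurd (hmain p hp q hq h2) (by omega)
      · have : rk p = rk q := by omega
        have : p = q := hrk_inj p hp q hq this
        subst this
        omega
    · exact hmain q hq p hp
  have hranks : ∀ p < n, stdRank u p = rk p := by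
    intro p hp
    rw [stdRank_eq_key_cnt u hg (by omega), hlen]
    have e1 : cnt n (fun q => key u q < key u p) = cnt n (fun q => rk q < rk p) :=
      cnt_congr _ _ _ (fun q hq => hkiff p hp q hq)
    have e2 : cnt n (fun q => rk q < rk p) = cnt n (fun k => k < rk p) :=
      cnt_comp_bij n rk hrk_lt hrk_inj (fun k => k < rk p)
    have e3 : cnt n (fun k => k < rk p) = rk p := by
      unfold cnt
      have : Finset.filter (fun k => k < rk p) (Finset.range n) = Finset.range (rk p) := by
        ext x
        simp only [Finset.mem_filter, Finset.mem_range]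
        have := hrk_lt p hp
        omega
      rw [this, Finset.card_range]
    rw [e1, e2, e3]
  exact ⟨u, hlen, hcan, hlet, hranks⟩

end PrimedSquare
namespace PrimedSquare

lemma AA_one (x : PWord) : AA x 1 = wtv x 0 := by
  rw [show (1:ℕ) = 0 + 1 by rfl, AA_succ, AA_zero]; omega

lemma AA_two (x : PWord) : AA x 2 = wtv x 0 + wtv x 1 := by
  rw [show (2:ℕ) = 1 + 1 by rfl, AA_succ, AA_one]

lemma AA_three (x : PWord) : AA x 3 = wtv x 0 + wtv x 1 + wtv x 2 := by
  rw [show (3:ℕ) = 2 + 1 by rfl, AA_succ, AA_two]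

lemma AA_four (x : PWord) : AA x 4 = wtv x 0 + wtv x 1 + wtv x 2 + wtv x 3 := by
  rw [show (4:ℕ) = 3 + 1 by rfl, AA_succ, AA_three]

lemma val_le_three (x : PWord) (hg : GoodW x) (hAA : AA x 4 = x.length) :
    ∀ p < x.length, (letterAt x p).1 ≤ 3 := by
  intro p hp
  by_contra hc
  push_neg at hc
  have h1 := rank_interval x hg hp
  have h2 := rank_lt_len x hg hp
  have h3 : AA x 4 ≤ AA x (letterAt x p).1 := AA_mono x (by omega)
  omega

lemma val_eq_iff (x : PWord) (hg : GoodW x) (hAA : AA x 4 = x.length)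
    {p : ℕ} (hp : p < x.length) {i : ℕ} (hi : 1 ≤ i) (hi3 : i ≤ 3) :
    (letterAt x p).1 = i ↔ (AA x i ≤ stdRank x p ∧ stdRank x p < AA x (i + 1)) := by
  constructor
  · intro h
    have := rank_interval x hg hp
    rw [h] at this
    exact this
  · rintro ⟨hlo, hhi⟩
    have hb := rank_interval x hg hp
    have h1 : 1 ≤ (letterAt x p).1 := hg p hp
    have h3 : (letterAt x p).1 ≤ 3 := val_le_three x hg hAA p hp
    by_contra hne
    rcases Nat.lt_or_ge (letterAt x p).1 i with hlt | hge
    · have := AA_mono x (show (letterAt x p).1 + 1 ≤ i by omega)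
      omega
    · have := AA_mono x (show i + 1 ≤ (letterAt x p).1 by omega)
      omega

lemma cnt_lt_const (n t : ℕ) (h : t ≤ n) : cnt n (fun k => k < t) = t := by
  unfold cnt
  have : Finset.filter (fun k => k < t) (Finset.range n) = Finset.range t := by
    ext x; simp only [Finset.mem_filter, Finset.mem_range]; omega
  rw [this, Finset.card_range]

lemma cnt_ico (n a b : ℕ) (h : b ≤ n) : cnt n (fun k => a ≤ k ∧ k < b) = b - a := by
  unfold cnt
  have : Finset.filter (fun k => a ≤ k ∧ k < b) (Finset.range n) = Finset.Ico a b := by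
    ext x; simp only [Finset.mem_filter, Finset.mem_range, Finset.mem_Ico]; omega
  rw [this, Nat.card_Ico]

lemma cnt_ge_const (n t : ℕ) : cnt n (fun k => t ≤ k) = n - t := by
  unfold cnt
  have : Finset.filter (fun k => t ≤ k) (Finset.range n) = Finset.Ico t n := by
    ext x; simp only [Finset.mem_filter, Finset.mem_range, Finset.mem_Ico]; omega
  rw [this, Nat.card_Ico]

lemma cnt_false (n : ℕ) (P : ℕ → Prop) [DecidablePred P] (h : ∀ q < n, ¬ P q) :
    cnt n P = 0 := by
  unfold cnt
  rw [Finset.card_eq_zero, Finset.filter_eq_empty_iff]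
  intro x hx
  exact h x (Finset.mem_range.1 hx)

lemma wtv_zero_of_all (x : PWord) (j : ℕ) (h : ∀ l ∈ x, l.1 ≠ j) : wtv x j = 0 := by
  rw [wtv, List.length_eq_zero_iff, List.filter_eq_nil_iff]
  intro a ha
  simp [h a ha]

end PrimedSquare

open PrimedSquare

/-- **Primed square for words.**  If `w` is a word in `{1', 1, 2', 2, 3', 3}`
on which both `F_1'` and `F_2'` are defined, then
`F_1'(F_2'(w)) = F_2'(F_1'(w)) ≠ ∅`. -/
theorem primed_square_words (w : PWord) (hw : Canonical w)
    (halph : ∀ l ∈ w, 1 ≤ l.1 ∧ l.1 ≤ 3)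
    (v₁ v₂ : PWord) (h1 : IsFprime 1 w v₁) (h2 : IsFprime 2 w v₂) :
    (∃ u, IsFprime 2 v₁ u ∧ IsFprime 1 v₂ u) ∧
    (∀ u u', IsFprime 2 v₁ u → IsFprime 1 v₂ u' → u = u') := by
  classical
  obtain ⟨hc1, hstd1, hA1, hB1, hC1⟩ := h1
  obtain ⟨hc2, hstd2, hA2, hB2, hC2⟩ := h2
  simp only [Nat.reduceAdd] at hB1 hC1 hB2 hC2
  -- basic weight facts
  have hw0 : wtv w 0 = 0 :=
    wtv_zero_of_all w 0 (fun l hl => by have := (halph l hl).1; omega)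
  have hw4 : ∀ j, 4 ≤ j → wtv w j = 0 :=
    fun j hj => wtv_zero_of_all w j (fun l hl => by have := (halph l hl).2; omega)
  have hgw : GoodW w := good_of_wtv0 w hw0
  have hv10 : wtv v₁ 0 = 0 := by rw [hC1 0 (by omega) (by omega)]; exact hw0
  have hv20 : wtv v₂ 0 = 0 := by rw [hC2 0 (by omega) (by omega)]; exact hw0
  have hg1 : GoodW v₁ := good_of_wtv0 v₁ hv10
  have hg2 : GoodW v₂ := good_of_wtv0 v₂ hv20
  have hv14 : ∀ j, 4 ≤ j → wtv v₁ j = 0 := fun j hj => by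
    rw [hC1 j (by omega) (by omega)]; exact hw4 j hj
  have hv24 : ∀ j, 4 ≤ j → wtv v₂ j = 0 := fun j hj => by
    rw [hC2 j (by omega) (by omega)]; exact hw4 j hj
  have hv13 : wtv v₁ 3 = wtv w 3 := hC1 3 (by omega) (by omega)
  have hv21 : wtv v₂ 1 = wtv w 1 := hC2 1 (by omega) (by omega)
  have hl1 : v₁.length = w.length := length_eq_of_std_eq hstd1
  have hl2 : v₂.length = w.length := length_eq_of_std_eq hstd2
  have hrk1 : ∀ p < w.length, stdRank v₁ p = stdRank w p :=
    fun p hp => stdRank_eq_of_std_eq hstd1 (by omega)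
  have hrk2 : ∀ p < w.length, stdRank v₂ p = stdRank w p :=
    fun p hp => stdRank_eq_of_std_eq hstd2 (by omega)
  have hAAw4 : AA w 4 = w.length := by
    have hfe : w.filter (fun l => decide (l.1 < 4)) = w :=
      List.filter_eq_self.mpr (fun a ha => by
        have := (halph a ha).2
        simp only [decide_eq_true_eq]
        omega)
    rw [AA, hfe]
  have hsum : wtv w 0 + wtv w 1 + wtv w 2 + wtv w 3 = w.length := by
    rw [← AA_four]; exact hAAw4
  have hn1 : 1 ≤ wtv w 1 := by omega
  have hn2 : 1 ≤ wtv w 2 := by omega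
  have hAA14 : AA v₁ 4 = v₁.length := by rw [AA_four, hl1]; omega
  have hAA24 : AA v₂ 4 = v₂.length := by rw [AA_four, hl2]; omega
  -- thresholds and target value function
  set t1 : ℕ := wtv w 1 - 1 with ht1
  set t2 : ℕ := wtv w 1 + wtv w 2 - 1 with ht2
  set vl : ℕ → ℕ := fun p =>
    if stdRank w p < t1 then 1 else if stdRank w p < t2 then 2 else 3 with hvl
  set mcl : ℕ → ℕ := fun p => sInf {m | m < w.length ∧ vl m = vl p} with hmcl
  set prm : ℕ → Bool := fun p => decide (stdRank w p < stdRank w (mcl p)) with hprm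
  have hmcleq : ∀ p, mcl p = sInf {m | m < w.length ∧ vl m = vl p} := fun p => by
    rw [hmcl]
  have hprmeq : ∀ p, prm p = decide (stdRank w p < stdRank w (mcl p)) := fun p => by
    rw [hprm]
  have hvl1 : ∀ p, (vl p = 1 ↔ stdRank w p < t1) := by
    intro p; rw [hvl]; dsimp only; split_ifs <;> omega
  have hvl2 : ∀ p, (vl p = 2 ↔ (t1 ≤ stdRank w p ∧ stdRank w p < t2)) := by
    intro p; rw [hvl]; dsimp only; split_ifs <;> omega
  have hvl3 : ∀ p, (vl p = 3 ↔ t2 ≤ stdRank w p) := by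
    intro p; rw [hvl]; dsimp only; split_ifs <;> omega
  have hvl_cases : ∀ p, vl p = 1 ∨ vl p = 2 ∨ vl p = 3 := by
    intro p; rw [hvl]; dsimp only; split_ifs <;> omega
  -- value characterizations in v₁ and v₂
  have hval11 : ∀ p < w.length, ((letterAt v₁ p).1 = 1 ↔ stdRank w p < t1) := by
    intro p hp
    rw [val_eq_iff v₁ hg1 hAA14 (by omega) (le_refl 1) (by omega), hrk1 p hp,
      AA_one, AA_two]
    omega
  have hval12 : ∀ p < w.length,
      ((letterAt v₁ p).1 = 2 ↔ (t1 ≤ stdRank w p ∧ stdRank w p < t2 + 1)) := by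
    intro p hp
    rw [val_eq_iff v₁ hg1 hAA14 (by omega) (by omega) (by omega), hrk1 p hp,
      AA_two, AA_three]
    omega
  have hval23 : ∀ p < w.length, ((letterAt v₂ p).1 = 3 ↔ t2 ≤ stdRank w p) := by
    intro p hp
    have hrlt : stdRank w p < w.length := rank_lt_len w hgw hp
    rw [val_eq_iff v₂ hg2 hAA24 (by omega) (by omega) (by omega), hrk2 p hp,
      AA_three, AA_four]
    omega
  -- hypotheses for `build`
  have hrk_lt : ∀ p < w.length, stdRank w p < w.length :=
    fun p hp => rank_lt_len w hgw hp
  have hrk_inj : ∀ p < w.length, ∀ q < w.length, stdRank w p = stdRank w q → p = q :=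
    fun p hp q hq h => rank_inj w hgw hp hq h
  have hvl_pos : ∀ p < w.length, 1 ≤ vl p := by
    intro p _; rw [hvl]; dsimp only; split_ifs <;> omega
  have hvl_mono : ∀ p < w.length, ∀ q < w.length, stdRank w p < stdRank w q →
      vl p ≤ vl q := by
    intro p _ q _ h; rw [hvl]; dsimp only; split_ifs <;> omega
  have hmclmem : ∀ p < w.length, mcl p ∈ {m | m < w.length ∧ vl m = vl p} := by
    intro p hp
    rw [hmcleq p]
    exact Nat.sInf_mem ⟨p, hp, rfl⟩
  have hprm_min : ∀ p < w.length, (∀ q < p, vl q ≠ vl p) → prm p = false := by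
    intro p hp hcond
    have hmem := hmclmem p hp
    have hle : mcl p ≤ p := by rw [hmcleq p]; exact Nat.sInf_le ⟨hp, rfl⟩
    have heq : mcl p = p := by
      by_contra hne
      exact hcond (mcl p) (by omega) hmem.2
    rw [hprmeq p, heq]
    simp
  have hmcl_congr : ∀ p q, vl p = vl q → mcl p = mcl q := by
    intro p q h
    rw [hmcleq p, hmcleq q, h]
  have hpf : ∀ p < w.length, ∀ q < w.length, vl p = vl q → prm p = true →
      prm q = false → stdRank w p < stdRank w q := by
    intro p hp q hq hveq hpp hqq
    rw [hprmeq p, decide_eq_true_eq] at hpp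
    rw [hprmeq q, decide_eq_false_iff_not, hmcl_congr q p hveq.symm] at hqq
    omega
  -- set-transfer facts
  have hset1 : ∀ p < w.length, vl p = 1 →
      {m' | m' < v₁.length ∧ (letterAt v₁ m').1 = (letterAt v₁ p).1}
        = {m | m < w.length ∧ vl m = vl p} := by
    intro p hp hvp
    have hp1 : (letterAt v₁ p).1 = 1 := (hval11 p hp).mpr ((hvl1 p).mp hvp)
    ext m'
    simp only [Set.mem_setOf_eq, hl1, hp1, hvp]
    constructor
    · rintro ⟨hm, hmv⟩; exact ⟨hm, (hvl1 m').mpr ((hval11 m' hm).mp hmv)⟩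
    · rintro ⟨hm, hmv⟩; exact ⟨hm, (hval11 m' hm).mpr ((hvl1 m').mp hmv)⟩
  have hset3 : ∀ p < w.length, vl p = 3 →
      {m' | m' < v₂.length ∧ (letterAt v₂ m').1 = (letterAt v₂ p).1}
        = {m | m < w.length ∧ vl m = vl p} := by
    intro p hp hvp
    have hp3 : (letterAt v₂ p).1 = 3 := (hval23 p hp).mpr ((hvl3 p).mp hvp)
    ext m'
    simp only [Set.mem_setOf_eq, hl2, hp3, hvp]
    constructor
    · rintro ⟨hm, hmv⟩; exact ⟨hm, (hvl3 m').mpr ((hval23 m' hm).mp hmv)⟩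
    · rintro ⟨hm, hmv⟩; exact ⟨hm, (hval23 m' hm).mpr ((hvl3 m').mp hmv)⟩
  have hsetT : ∀ p < w.length, vl p = 2 →
      {m' | m' < v₁.length ∧ (letterAt v₁ m').1 = (letterAt v₁ p).1}
        = {m | m < w.length ∧ t1 ≤ stdRank w m ∧ stdRank w m < t2 + 1} := by
    intro p hp hvp
    have hp2 : (letterAt v₁ p).1 = 2 := by
      have := (hvl2 p).mp hvp
      exact (hval12 p hp).mpr ⟨this.1, by omega⟩
    ext m'
    simp only [Set.mem_setOf_eq, hl1, hp2]
    constructor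
    · rintro ⟨hm, hmv⟩; exact ⟨hm, (hval12 m' hm).mp hmv⟩
    · rintro ⟨hm, hmv⟩; exact ⟨hm, (hval12 m' hm).mpr hmv⟩
  -- membership facts for class 2
  have hTmem : ∀ p < w.length, vl p = 2 →
      sInf {m | m < w.length ∧ t1 ≤ stdRank w m ∧ stdRank w m < t2 + 1} ∈
        {m | m < w.length ∧ t1 ≤ stdRank w m ∧ stdRank w m < t2 + 1} := by
    intro p hp hvp
    have := (hvl2 p).mp hvp
    exact Nat.sInf_mem ⟨p, hp, this.1, by omega⟩
  -- descending condition
  have hdesc : ∀ p < w.length, ∀ q < w.length, vl p = vl q → prm p = true →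
      prm q = true → stdRank w p < stdRank w q → q < p := by
    intro p hp q hq hveq hpp hpq hlt
    rw [hprmeq p, decide_eq_true_eq] at hpp
    rw [hprmeq q, decide_eq_true_eq, hmcl_congr q p hveq.symm] at hpq
    have hmmem := hmclmem p hp
    have hmlen : mcl p < w.length := hmmem.1
    rcases hvl_cases p with hcv | hcv | hcv
    · -- class 1, via v₁
      have hq1 : vl q = 1 := by rw [← hveq]; exact hcv
      refine cls_desc v₁ hc1 hg1 (show p < v₁.length by omega)
        (show q < v₁.length by omega) ?_ ?_ ?_
      · rw [(hval11 q hq).mpr ((hvl1 q).mp hq1), (hval11 p hp).mpr ((hvl1 p).mp hcv)]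
      · rw [hrk1 p hp, hrk1 q hq]; exact hlt
      · rw [hset1 p hp hcv, ← hmcleq p, hrk1 q hq, hrk1 (mcl p) hmmem.1]
        omega
    · -- class 2, via v₁
      have hq2 : vl q = 2 := by rw [← hveq]; exact hcv
      have hTm := hTmem p hp hcv
      set mT := sInf {m | m < w.length ∧ t1 ≤ stdRank w m ∧ stdRank w m < t2 + 1}
        with hmT
      have hklt : stdRank w q < stdRank w mT := by
        rcases Nat.lt_or_ge (stdRank w mT) t2 with hcase | hcase
        · -- mT is in the smaller class, so mT = mcl p
          have hTS : mT ∈ {m | m < w.length ∧ vl m = vl p} :=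
            ⟨hTm.1, by rw [hcv]; exact (hvl2 mT).mpr ⟨hTm.2.1, hcase⟩⟩
          have e1 : mcl p ≤ mT := by rw [hmcleq p]; exact Nat.sInf_le hTS
          have e2 : mT ≤ mcl p := by
            rw [hmT]
            refine Nat.sInf_le ⟨hmmem.1, ?_⟩
            have := (hvl2 (mcl p)).mp (by rw [hmmem.2]; exact hcv)
            exact ⟨this.1, by omega⟩
          have : mT = mcl p := by omega
          rw [this]; exact hpq
        · have := (hvl2 q).mp hq2
          omega
      refine cls_desc v₁ hc1 hg1 (show p < v₁.length by omega)
        (show q < v₁.length by omega) ?_ ?_ ?_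
      · have e1 := (hvl2 q).mp hq2
        have e2 := (hvl2 p).mp hcv
        rw [(hval12 q hq).mpr ⟨e1.1, by omega⟩, (hval12 p hp).mpr ⟨e2.1, by omega⟩]
      · rw [hrk1 p hp, hrk1 q hq]; exact hlt
      · rw [hsetT p hp hcv, ← hmT, hrk1 q hq, hrk1 mT hTm.1]
        exact hklt
    · -- class 3, via v₂
      have hq3 : vl q = 3 := by rw [← hveq]; exact hcv
      refine cls_desc v₂ hc2 hg2 (show p < v₂.length by omega)
        (show q < v₂.length by omega) ?_ ?_ ?_
      · rw [(hval23 q hq).mpr ((hvl3 q).mp hq3), (hval23 p hp).mpr ((hvl3 p).mp hcv)]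
      · rw [hrk2 p hp, hrk2 q hq]; exact hlt
      · rw [hset3 p hp hcv, ← hmcleq p, hrk2 q hq, hrk2 (mcl p) hmmem.1]
        omega
  -- ascending condition
  have hasc : ∀ p < w.length, ∀ q < w.length, vl p = vl q → prm p = false →
      prm q = false → stdRank w p < stdRank w q → p < q := by
    intro p hp q hq hveq hpp hpq hlt
    rw [hprmeq p, decide_eq_false_iff_not, Nat.not_lt] at hpp
    rw [hprmeq q, decide_eq_false_iff_not, Nat.not_lt,
      hmcl_congr q p hveq.symm] at hpq
    have hmmem := hmclmem p hp
    have hmlen : mcl p < w.length := hmmem.1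
    rcases hvl_cases p with hcv | hcv | hcv
    · -- class 1, via v₁
      have hq1 : vl q = 1 := by rw [← hveq]; exact hcv
      refine cls_asc v₁ hc1 hg1 (show p < v₁.length by omega)
        (show q < v₁.length by omega) ?_ ?_ ?_
      · rw [(hval11 q hq).mpr ((hvl1 q).mp hq1), (hval11 p hp).mpr ((hvl1 p).mp hcv)]
      · rw [hrk1 p hp, hrk1 q hq]; exact hlt
      · rw [hset1 p hp hcv, ← hmcleq p, hrk1 p hp, hrk1 (mcl p) hmmem.1]
        exact hpp
    · -- class 2, via v₁
      have hq2 : vl q = 2 := by rw [← hveq]; exact hcv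
      have hTm := hTmem p hp hcv
      set mT := sInf {m | m < w.length ∧ t1 ≤ stdRank w m ∧ stdRank w m < t2 + 1}
        with hmT
      rcases Nat.lt_or_ge (stdRank w mT) t2 with hcase | hcase
      · -- mT = mcl p
        have hTS : mT ∈ {m | m < w.length ∧ vl m = vl p} :=
          ⟨hTm.1, by rw [hcv]; exact (hvl2 mT).mpr ⟨hTm.2.1, hcase⟩⟩
        have e1 : mcl p ≤ mT := by rw [hmcleq p]; exact Nat.sInf_le hTS
        have e2 : mT ≤ mcl p := by
          rw [hmT]
          refine Nat.sInf_le ⟨hmmem.1, ?_⟩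
          have := (hvl2 (mcl p)).mp (by rw [hmmem.2]; exact hcv)
          exact ⟨this.1, by omega⟩
        have hmteq : mT = mcl p := by omega
        refine cls_asc v₁ hc1 hg1 (show p < v₁.length by omega)
          (show q < v₁.length by omega) ?_ ?_ ?_
        · have e3 := (hvl2 q).mp hq2
          have e4 := (hvl2 p).mp hcv
          rw [(hval12 q hq).mpr ⟨e3.1, by omega⟩, (hval12 p hp).mpr ⟨e4.1, by omega⟩]
        · rw [hrk1 p hp, hrk1 q hq]; exact hlt
        · rw [hsetT p hp hcv, ← hmT, hrk1 p hp, hrk1 mT hTm.1, hmteq]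
          exact hpp
      · -- impossible: the whole class is descending
        exfalso
        have hmclp2 : vl (mcl p) = vl p := hmmem.2
        have hmcl2 := (hvl2 (mcl p)).mp (by rw [hmclp2]; exact hcv)
        have hq2' := (hvl2 q).mp hq2
        have hmlt : stdRank w (mcl p) < stdRank w q := by omega
        have hfin : q < mcl p := by
          refine cls_desc v₁ hc1 hg1 (show mcl p < v₁.length by omega)
            (show q < v₁.length by omega) ?_ ?_ ?_
          · rw [(hval12 q hq).mpr ⟨hq2'.1, by omega⟩,
              (hval12 (mcl p) hmmem.1).mpr ⟨hmcl2.1, by omega⟩]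
          · rw [hrk1 (mcl p) hmmem.1, hrk1 q hq]; exact hmlt
          · have hsetT' := hsetT (mcl p) hmmem.1 (by rw [hmclp2]; exact hcv)
            rw [hsetT', ← hmT, hrk1 q hq, hrk1 mT hTm.1]
            omega
        have : mcl p ≤ q := by
          rw [hmcleq p]
          exact Nat.sInf_le ⟨hq, by rw [hq2, hcv]⟩
        omega
    · -- class 3, via v₂
      have hq3 : vl q = 3 := by rw [← hveq]; exact hcv
      refine cls_asc v₂ hc2 hg2 (show p < v₂.length by omega)
        (show q < v₂.length by omega) ?_ ?_ ?_
      · rw [(hval23 q hq).mpr ((hvl3 q).mp hq3), (hval23 p hp).mpr ((hvl3 p).mp hcv)]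
      · rw [hrk2 p hp, hrk2 q hq]; exact hlt
      · rw [hset3 p hp hcv, ← hmcleq p, hrk2 p hp, hrk2 (mcl p) hmmem.1]
        exact hpp
  -- build the word u
  obtain ⟨u, hulen, hucan, hulet, hurk⟩ :=
    build w.length (fun p => stdRank w p) vl prm hrk_lt hrk_inj hvl_pos hvl_mono
      hprm_min hdesc hasc hpf
  have hustd : std u = std w :=
    std_eq_of_ranks (by omega) (fun p hp => hurk p (by omega))
  -- weights of u
  have huw : ∀ j, wtv u j = cnt w.length (fun q => vl q = j) := by
    intro j
    rw [wtv_eq_cnt, hulen]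
    refine cnt_congr _ _ _ (fun q hq => ?_)
    rw [hulet q hq]
  have hu1 : wtv u 1 = wtv w 1 - 1 := by
    rw [huw 1, cnt_congr _ _ (fun q => stdRank w q < t1) (fun q _ => hvl1 q),
      cnt_comp_bij w.length (fun p => stdRank w p) hrk_lt hrk_inj (fun k => k < t1),
      cnt_lt_const _ _ (by omega)]
  have hu2 : wtv u 2 = wtv w 2 := by
    rw [huw 2, cnt_congr _ _ (fun q => t1 ≤ stdRank w q ∧ stdRank w q < t2)
        (fun q _ => hvl2 q),
      cnt_comp_bij w.length (fun p => stdRank w p) hrk_lt hrk_inj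
        (fun k => t1 ≤ k ∧ k < t2),
      cnt_ico _ _ _ (by omega)]
    omega
  have hu3 : wtv u 3 = wtv w 3 + 1 := by
    rw [huw 3, cnt_congr _ _ (fun q => t2 ≤ stdRank w q) (fun q _ => hvl3 q),
      cnt_comp_bij w.length (fun p => stdRank w p) hrk_lt hrk_inj (fun k => t2 ≤ k),
      cnt_ge_const]
    omega
  have huo : ∀ j, j ≠ 1 → j ≠ 2 → j ≠ 3 → wtv u j = 0 := by
    intro j e1 e2 e3
    rw [huw j]
    refine cnt_false _ _ (fun q _ hq => ?_)
    rcases hvl_cases q with h | h | h <;> omega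
  constructor
  · refine ⟨u, ⟨hucan, hustd.trans hstd1.symm, by omega,
      by show wtv u 3 = wtv v₁ 3 + 1; omega, ?_⟩,
      ⟨hucan, hustd.trans hstd2.symm, by omega,
      by show wtv u 2 = wtv v₂ 2 + 1; omega, ?_⟩⟩
    · intro j hj2 hj3
      have hj3' : j ≠ 3 := by omega
      rcases Nat.lt_or_ge j 4 with hj | hj
      · interval_cases j
        · rw [huo 0 (by omega) (by omega) (by omega), hv10]
        · rw [hu1]; omega
        · omega
        · omega
      · rw [huo j (by omega) (by omega) (by omega), hv14 j hj]
    · intro j hj1 hj2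
      have hj2' : j ≠ 2 := by omega
      rcases Nat.lt_or_ge j 4 with hj | hj
      · interval_cases j
        · rw [huo 0 (by omega) (by omega) (by omega), hv20]
        · omega
        · omega
        · show wtv u 3 = wtv v₂ 3
          omega
      · rw [huo j (by omega) (by omega) (by omega), hv24 j hj]
  · rintro x x' ⟨hcx, hsx, hxa, hxb, hxc⟩ ⟨hcx', hsx', hxa', hxb', hxc'⟩
    simp only [Nat.reduceAdd] at hxb hxc hxb' hxc'
    have hx0 : wtv x 0 = 0 := by rw [hxc 0 (by omega) (by omega)]; exact hv10
    have hx0' : wtv x' 0 = 0 := by rw [hxc' 0 (by omega) (by omega)]; exact hv20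
    refine canon_det x x' hcx hcx' hx0
      (by rw [hsx, hstd1, ← hstd2, ← hsx']) ?_
    intro j
    rcases Nat.lt_or_ge j 4 with hj | hj
    · interval_cases j
      · rw [hx0, hx0']
      · have e1 : wtv x 1 = wtv v₁ 1 := hxc 1 (by omega) (by omega)
        have e2 := hxa'
        omega
      · have e1 := hxa
        have e2 : wtv x' 2 = wtv v₂ 2 + 1 := hxb'
        omega
      · have e1 : wtv x 3 = wtv v₁ 3 + 1 := hxb
        have e2 : wtv x' 3 = wtv v₂ 3 := hxc' 3 (by omega) (by omega)
        omega
    · rw [hxc j (by omega) (by omega), hxc' j (by omega) (by omega),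
        hC1 j (by omega) (by omega), hC2 j (by omega) (by omega)]
end
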